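/- Let d, Q ≥ 1 and 0 < r < Q be integers, and for 1 ≤ i ≤ j ≤ Q let L[i,j] = |{i, i+1, …, j} ∩ {⌈Q/r⌉, ⌈2Q/r⌉, …, ⌈(r−1)Q/r⌉, Q}|. Then for every 1 ≤ i ≤ j < Q, the set S = σ_i ∪ σ_{i+1} ∪ … ∪ σ_j satisfies dens_{T_r}(S) = 2^d + ( (2^d − 1)·L[i,j] + (d−1)·2^d + 1 ) / (d(j − i + 1)). -/

import Mathlib

/-- The block `σ_i = {id+1, id+2, …, (i+1)d}` of vertices. -/
def sigmaB (d i : ℕ) : Finset ℕ := Finset.Icc (i * d + 1) ((i + 1) * d)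

/-- The `d`-tree `T_0` on vertex set `{1, …, d(Q+1)}`: its simplices are the nonempty
subsets `σ` with `max σ − min σ ≤ d` (equivalently, `a ≤ b + d` for all `a, b ∈ σ`). -/
def T0 (d Q : ℕ) : Finset (Finset ℕ) :=
  (Finset.Icc 1 (d * (Q + 1))).powerset.filter
    (fun σ => σ.Nonempty ∧ ∀ a ∈ σ, ∀ b ∈ σ, a ≤ b + d)

/-- The `k`-th attached root vertex (for `k = 0, 1, …`): a fresh vertex label. -/
def rootVtx (d Q k : ℕ) : ℕ := d * (Q + 1) + k + 1

/-- The index of the block to which the `k`-th root vertex is attached in `T_r`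
(`k = 0, …, r−1`).  Writing `r = aQ + b` with `b = r % Q`, the first `b` vertices are
attached to `σ_{⌈Q/b⌉}, σ_{⌈2Q/b⌉}, …, σ_{⌈bQ/b⌉} = σ_Q` (coming from the base case
`T_b`), and the remaining `aQ` vertices are attached cyclically to `σ_1, …, σ_Q`
(`a` full rounds), corresponding to the recursion `T_r = T_{r−Q} + (σ_1, …, σ_Q)`. -/
def target (Q r k : ℕ) : ℕ :=
  if k < r % Q then ((k + 1) * Q + (r % Q) - 1) / (r % Q)
  else (k - r % Q) % Q + 1

/-- The rooted `d`-tree `T_r`: the complex `T_0` together with, for each `k < r`, the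
root vertex `rootVtx d Q k` attached to the `(d−1)`-simplex `σ_{target Q r k}`
(attaching adds all sets `τ ∪ {v}` for `τ ⊆ σ`). -/
def Tr (d Q r : ℕ) : Finset (Finset ℕ) :=
  T0 d Q ∪ (Finset.range r).biUnion
    (fun k => (sigmaB d (target Q r k)).powerset.image (insert (rootVtx d Q k)))

/-- The set of vertex roots of `T_r`. -/
def rootSet (d Q r : ℕ) : Finset ℕ := (Finset.range r).image (rootVtx d Q)

/-- `e_C(S)`: the number of nonempty simplices of `C` with at least one vertex in `S`. -/
def eCount (C : Finset (Finset ℕ)) (S : Finset ℕ) : ℕ :=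
  (C.filter (fun σ => σ.Nonempty ∧ (σ ∩ S).Nonempty)).card

/-- The density `dens_C(S) = e_C(S)/|S|`. -/
noncomputable def dens (C : Finset (Finset ℕ)) (S : Finset ℕ) : ℝ :=
  (eCount C S : ℝ) / (S.card : ℝ)

/-- The vertex set of a complex. -/
def verts (C : Finset (Finset ℕ)) : Finset ℕ := C.sup id

/-- The unrooted vertices of `T_r`: all vertices except the simplex root `σ_0` and the
vertex roots. -/
def unrooted (d Q r : ℕ) : Finset ℕ :=
  verts (Tr d Q r) \ (sigmaB d 0 ∪ rootSet d Q r)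

/-- `L[i,j] = |{i, i+1, …, j} ∩ {⌈Q/r⌉, ⌈2Q/r⌉, …, ⌈(r−1)Q/r⌉, Q}|`
(note `⌈rQ/r⌉ = Q`, and `⌈x/r⌉ = (x + r − 1)/r` in natural arithmetic). -/
def Lfun (Q r i j : ℕ) : ℕ :=
  (Finset.Icc i j ∩ (Finset.Icc 1 r).image (fun k => (k * Q + r - 1) / r)).card

open Finset hiding dens

/-! The simplices of `T_r` meeting `S = σ_i ∪ … ∪ σ_j = (id, (j+1)d]` are those of `T_0` and
the cones from the vertex roots. A simplex of `T_0` has diameter at most `d`, so one missing the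
interval `S` of at least `d` vertices lies entirely on one side of it; since the simplices of
diameter `≤ d` on `n ≥ d` consecutive vertices number `(n - d + 1) 2^d - 1`, this gives
`e_{T_0}(S) = (|S| + d - 1) 2^d + 1`. A vertex root attached to `σ_t` adds `2^d - 1` simplices
meeting `S` if `i ≤ t ≤ j` and none otherwise, and as `m ↦ ⌈mQ/r⌉` is strictly increasing these
roots are counted by `L[i,j]`. -/

def chainSimplices (d : ℕ) (s : Finset ℕ) : Finset (Finset ℕ) :=
  s.powerset.filter (fun σ => σ.Nonempty ∧ ∀ a ∈ σ, ∀ b ∈ σ, a ≤ b + d)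

lemma T0_eq_chainSimplices (d Q : ℕ) : T0 d Q = chainSimplices d (Ioc 0 (d * (Q + 1))) := by
  rw [← Icc_add_one_left_eq_Ioc]
  rfl

lemma injOn_insert_powerset {v : ℕ} {s : Finset ℕ} (hv : v ∉ s) :
    Set.InjOn (insert v) (s.powerset : Set (Finset ℕ)) := by
  intro τ hτ τ' hτ' h
  have hvτ : v ∉ τ := fun h' => hv (mem_powerset.mp hτ h')
  have hvτ' : v ∉ τ' := fun h' => hv (mem_powerset.mp hτ' h')
  rw [← erase_insert hvτ, ← erase_insert hvτ', h]

lemma card_image_insert_powerset {v : ℕ} {s : Finset ℕ} (hv : v ∉ s) :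
    #(s.powerset.image (insert v)) = 2 ^ #s := by
  rw [card_image_of_injOn (injOn_insert_powerset hv), card_powerset]

lemma chainSimplices_Ioc_add_eq_powerset_erase (a d : ℕ) :
    chainSimplices d (Ioc a (a + d)) = (Ioc a (a + d)).powerset.erase ∅ := by
  ext σ
  simp only [chainSimplices, mem_filter, mem_erase, mem_powerset, ← nonempty_iff_ne_empty]
  constructor
  · rintro ⟨hσ, hne, -⟩
    exact ⟨hne, hσ⟩
  · rintro ⟨hne, hσ⟩
    refine ⟨hσ, hne, fun x hx y hy => ?_⟩
    have := mem_Ioc.mp (hσ hx)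
    have := mem_Ioc.mp (hσ hy)
    omega

lemma card_chainSimplices_Ioc_succ {a c : ℕ} (d : ℕ) (hac : a ≤ c) :
    #(chainSimplices d (Ioc a (c + d + 1))) = #(chainSimplices d (Ioc a (c + d))) + 2 ^ d := by
  have hsplit : chainSimplices d (Ioc a (c + d + 1)) = chainSimplices d (Ioc a (c + d)) ∪
      (Ioc c (c + d)).powerset.image (insert (c + d + 1)) := by
    ext σ
    simp only [chainSimplices, ← insert_Ioc_right_eq_Ioc_add_one (show a ≤ c + d by omega),
      mem_union, mem_filter, mem_powerset, mem_image]
    constructor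
    · rintro ⟨hσ, hne, hdiam⟩
      by_cases htop : c + d + 1 ∈ σ
      · right
        refine ⟨σ.erase (c + d + 1), fun x hx => ?_, insert_erase htop⟩
        obtain ⟨hx, hxσ⟩ := mem_erase.mp hx
        have := mem_Ioc.mp (mem_of_mem_insert_of_ne (hσ hxσ) hx)
        have := hdiam _ htop x hxσ
        exact mem_Ioc.mpr (by omega)
      · left
        exact ⟨fun x hx => mem_of_mem_insert_of_ne (hσ hx) (fun h => htop (h ▸ hx)), hne, hdiam⟩
    · rintro (⟨hσ, hne, hdiam⟩ | ⟨τ, hτ, rfl⟩)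
      · exact ⟨hσ.trans (subset_insert _ _), hne, hdiam⟩
      · have hτ' : ∀ x ∈ τ, c < x ∧ x ≤ c + d := fun x hx => mem_Ioc.mp (hτ hx)
        refine ⟨insert_subset_insert _ (hτ.trans (Ioc_subset_Ioc_left hac)), insert_nonempty _ _,
          ?_⟩
        simp only [mem_insert]
        rintro x (rfl | hx) y (rfl | hy)
        all_goals grind
  have hdisj : Disjoint (chainSimplices d (Ioc a (c + d)))
      ((Ioc c (c + d)).powerset.image (insert (c + d + 1))) := by
    rw [disjoint_right]
    rintro σ hσ hσ'
    obtain ⟨τ, -, rfl⟩ := mem_image.mp hσ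
    have := mem_Ioc.mp (mem_powerset.mp (mem_filter.mp hσ').1 (mem_insert_self _ τ))
    omega
  rw [hsplit, card_union_of_disjoint hdisj, card_image_insert_powerset (by simp)]
  simp

lemma card_chainSimplices_Ioc (a d n : ℕ) :
    #(chainSimplices d (Ioc a (a + d + n))) + 1 = (n + 1) * 2 ^ d := by
  induction n with
  | zero =>
    rw [add_zero, chainSimplices_Ioc_add_eq_powerset_erase,
      card_erase_add_one (empty_mem_powerset _), card_powerset, Nat.card_Ioc]
    simp
  | succ n ih =>
    rw [show a + d + (n + 1) = a + n + d + 1 by omega,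
      card_chainSimplices_Ioc_succ d (Nat.le_add_right a n), show a + n + d = a + d + n by omega]
    linarith

lemma eCount_chainSimplices_add_card {a A B N : ℕ} (d : ℕ) (haA : a ≤ A) (hAB : A + d ≤ B)
    (hBN : B ≤ N) :
    eCount (chainSimplices d (Ioc a N)) (Ioc A B) + #(chainSimplices d (Ioc a A)) +
      #(chainSimplices d (Ioc B N)) = #(chainSimplices d (Ioc a N)) := by
  have hmeet : eCount (chainSimplices d (Ioc a N)) (Ioc A B) =
      #((chainSimplices d (Ioc a N)).filter fun σ => (σ ∩ Ioc A B).Nonempty) := by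
    unfold eCount
    congr 1
    exact filter_congr fun σ hσ => and_iff_right (mem_filter.mp hσ).2.1
  -- a simplex avoiding `Ioc A B` cannot straddle it, since that gap is longer than `d`
  have hmiss : (chainSimplices d (Ioc a N)).filter (fun σ => ¬(σ ∩ Ioc A B).Nonempty) =
      chainSimplices d (Ioc a A) ∪ chainSimplices d (Ioc B N) := by
    ext σ
    simp only [chainSimplices, mem_union, mem_filter, mem_powerset, not_nonempty_iff_eq_empty,
      ← disjoint_iff_inter_eq_empty, disjoint_left, mem_Ioc, subset_iff]
    constructor
    · rintro ⟨⟨hσ, ⟨x, hx⟩, hdiam⟩, hgap⟩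
      by_cases hxA : x ≤ A
      · left
        refine ⟨fun y hy => ?_, ⟨x, hx⟩, hdiam⟩
        have := hσ hy; have := hgap hy; have := hdiam y hy x hx
        omega
      · right
        refine ⟨fun y hy => ?_, ⟨x, hx⟩, hdiam⟩
        have := hσ hy; have := hgap hy; have := hgap hx; have := hdiam x hx y hy
        omega
    · rintro (⟨hσ, hne, hdiam⟩ | ⟨hσ, hne, hdiam⟩)
      · exact ⟨⟨fun y hy => by have := hσ hy; omega, hne, hdiam⟩,
          fun y hy => by have := hσ hy; omega⟩
      · exact ⟨⟨fun y hy => by have := hσ hy; omega, hne, hdiam⟩,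
          fun y hy => by have := hσ hy; omega⟩
  have hdisj : Disjoint (chainSimplices d (Ioc a A)) (chainSimplices d (Ioc B N)) := by
    rw [disjoint_left]
    intro σ hσ hσ'
    obtain ⟨x, hx⟩ := (mem_filter.mp hσ).2.1
    have := mem_Ioc.mp (mem_powerset.mp (mem_filter.mp hσ).1 hx)
    have := mem_Ioc.mp (mem_powerset.mp (mem_filter.mp hσ').1 hx)
    omega
  rw [hmeet, add_assoc, ← card_union_of_disjoint hdisj, ← hmiss,
    card_filter_add_card_filter_not]

lemma eCount_chainSimplices_Ioc {a A B N : ℕ} (d : ℕ) (haA : a + d ≤ A) (hAB : A + d ≤ B)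
    (hBN : B + d ≤ N) :
    eCount (chainSimplices d (Ioc a N)) (Ioc A B) + 2 ^ d = (B - A + d) * 2 ^ d + 1 := by
  obtain ⟨p, rfl⟩ := Nat.exists_eq_add_of_le haA
  obtain ⟨m, rfl⟩ := Nat.exists_eq_add_of_le (le_of_add_le_left hAB)
  obtain ⟨q, rfl⟩ := Nat.exists_eq_add_of_le hBN
  have hsplit := eCount_chainSimplices_add_card (a := a) (A := a + d + p) (B := a + d + p + m)
    (N := a + d + p + m + d + q) d (by omega) (by omega) (by omega)
  have hleft := card_chainSimplices_Ioc a d p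
  have hright := card_chainSimplices_Ioc (a + d + p + m) d q
  have hall := card_chainSimplices_Ioc a d (p + m + d + q)
  rw [show a + d + (p + m + d + q) = a + d + p + m + d + q by omega] at hall
  rw [show a + d + p + m - (a + d + p) = m by omega]
  linarith

lemma sigmaB_eq_Ioc (d t : ℕ) : sigmaB d t = Ioc (t * d) ((t + 1) * d) :=
  Icc_add_one_left_eq_Ioc _ _

lemma card_sigmaB (d t : ℕ) : #(sigmaB d t) = d := by
  rw [sigmaB_eq_Ioc, Nat.card_Ioc, add_one_mul, Nat.add_sub_cancel_left]

lemma biUnion_sigmaB {i j : ℕ} (d : ℕ) (hij : i ≤ j) :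
    (Icc i j).biUnion (sigmaB d) = Ioc (i * d) ((j + 1) * d) := by
  induction j, hij using Nat.le_induction with
  | base => rw [Icc_self, singleton_biUnion, sigmaB_eq_Ioc]
  | succ j hij ih =>
    rw [← insert_Icc_right_eq_Icc_add_one (by omega), biUnion_insert, ih, sigmaB_eq_Ioc, union_comm,
      Ioc_union_Ioc_eq_Ioc (Nat.mul_le_mul_right d (by omega)) (Nat.mul_le_mul_right d (by omega))]

lemma pairwiseDisjoint_sigmaB (d : ℕ) : (Set.univ : Set ℕ).PairwiseDisjoint (sigmaB d) := by
  intro t _ t' _ htt'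
  simp only [Function.onFun, sigmaB_eq_Ioc]
  rcases Nat.lt_or_gt_of_ne htt' with h | h
  · exact Ioc_disjoint_Ioc_of_le (Nat.mul_le_mul_right d h)
  · exact (Ioc_disjoint_Ioc_of_le (Nat.mul_le_mul_right d h)).symm

lemma sigmaB_subset_Ioc {d t Q : ℕ} (ht : t ≤ Q) : sigmaB d t ⊆ Ioc 0 (d * (Q + 1)) := by
  rw [sigmaB_eq_Ioc, mul_comm d]
  exact Ioc_subset_Ioc (Nat.zero_le _) (Nat.mul_le_mul_right d (by omega))

lemma rootVtx_notMem_Ioc (d Q k : ℕ) : rootVtx d Q k ∉ Ioc 0 (d * (Q + 1)) := by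
  simp [rootVtx]

lemma eCount_union {C D : Finset (Finset ℕ)} (h : Disjoint C D) (S : Finset ℕ) :
    eCount (C ∪ D) S = eCount C S + eCount D S := by
  unfold eCount
  rw [filter_union, card_union_of_disjoint (disjoint_filter_filter h)]

lemma eCount_biUnion {ι : Type*} {s : Finset ι} {C : ι → Finset (Finset ℕ)}
    (h : (s : Set ι).PairwiseDisjoint C) (S : Finset ℕ) :
    eCount (s.biUnion C) S = ∑ k ∈ s, eCount (C k) S := by
  classical
  unfold eCount
  rw [filter_biUnion, card_biUnion fun k hk k' hk' hkk' =>
    disjoint_filter_filter (h hk hk' hkk')]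

lemma card_filter_inter_nonempty_add (s S : Finset ℕ) :
    #(s.powerset.filter fun τ => (τ ∩ S).Nonempty) + 2 ^ #(s \ S) = 2 ^ #s := by
  have hmiss : s.powerset.filter (fun τ => ¬(τ ∩ S).Nonempty) = (s \ S).powerset := by
    ext τ
    simp [subset_sdiff, not_nonempty_iff_eq_empty, disjoint_iff_inter_eq_empty]
  rw [← card_powerset, ← card_powerset, ← hmiss, card_filter_add_card_filter_not]

lemma eCount_image_insert_powerset_add {v : ℕ} {s S : Finset ℕ} (hvs : v ∉ s) (hvS : v ∉ S) :
    eCount (s.powerset.image (insert v)) S + 2 ^ #(s \ S) = 2 ^ #s := by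
  unfold eCount
  rw [filter_image,
    card_image_of_injOn ((injOn_insert_powerset hvs).mono (coe_subset.mpr (filter_subset _ _)))]
  simp only [insert_nonempty, true_and, insert_inter_of_notMem hvS]
  exact card_filter_inter_nonempty_add s S

lemma target_eq {Q r k : ℕ} (hrQ : r < Q) (hk : k < r) :
    target Q r k = ((k + 1) * Q + r - 1) / r := by
  rw [target, Nat.mod_eq_of_lt hrQ, if_pos hk]

lemma target_le {Q r k : ℕ} (hrQ : r < Q) (hk : k < r) : target Q r k ≤ Q := by
  rw [target_eq hrQ hk, Nat.div_le_iff_le_mul_add_pred (by omega)]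
  have : (k + 1) * Q ≤ r * Q := Nat.mul_le_mul_right Q hk
  omega

lemma strictMono_ceil_mul_div {Q r : ℕ} (hr : 0 < r) (hrQ : r ≤ Q) :
    StrictMono fun m => (m * Q + r - 1) / r := by
  refine strictMono_nat_of_lt_succ fun m => ?_
  calc (m * Q + r - 1) / r < (m * Q + r - 1) / r + 1 := Nat.lt_succ_self _
    _ = (m * Q + r - 1 + r) / r := (Nat.add_div_right _ hr).symm
    _ ≤ ((m + 1) * Q + r - 1) / r := Nat.div_le_div_right (by rw [add_one_mul]; omega)

lemma card_filter_target_mem {Q r : ℕ} (hr : 0 < r) (hrQ : r < Q) (I : Finset ℕ) :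
    #((range r).filter fun k => target Q r k ∈ I) =
      #(I ∩ (Icc 1 r).image fun m => (m * Q + r - 1) / r) := by
  rw [inter_comm, ← filter_mem_eq_inter, filter_image,
    card_image_of_injOn (strictMono_ceil_mul_div hr hrQ.le).injective.injOn]
  refine card_nbij (· + 1) (fun k hk => ?_) (fun k _ k' _ h => Nat.succ_injective h) ?_
  · rw [mem_coe, mem_filter, mem_range] at hk
    rw [mem_coe, mem_filter, mem_Icc, ← target_eq hrQ hk.1]
    exact ⟨⟨k.succ_pos, hk.1⟩, hk.2⟩
  · rintro m hm
    rw [mem_coe, mem_filter, mem_Icc] at hm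
    refine ⟨m - 1, ?_, by simp; omega⟩
    rw [mem_coe, mem_filter, mem_range, target_eq hrQ (by omega), Nat.sub_add_cancel hm.1.1]
    exact ⟨by omega, hm.2⟩

lemma card_biUnion_sigmaB (d i j : ℕ) : #((Icc i j).biUnion (sigmaB d)) = (j + 1 - i) * d := by
  rw [card_biUnion fun t _ t' _ h => pairwiseDisjoint_sigmaB d (Set.mem_univ t)
    (Set.mem_univ t') h]
  simp [card_sigmaB]

lemma eCount_T0_blocks (d : ℕ) {Q i j : ℕ} (hi : 1 ≤ i) (hij : i ≤ j) (hjQ : j < Q) :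
    eCount (T0 d Q) ((Icc i j).biUnion (sigmaB d)) + 2 ^ d =
      (#((Icc i j).biUnion (sigmaB d)) + d) * 2 ^ d + 1 := by
  rw [biUnion_sigmaB d hij, T0_eq_chainSimplices, Nat.card_Ioc]
  refine eCount_chainSimplices_Ioc d ?_ ?_ ?_
  · simpa using Nat.le_mul_of_pos_left d hi
  · simpa [add_one_mul] using Nat.mul_le_mul_right d (show i + 1 ≤ j + 1 by omega)
  · simpa [add_one_mul, mul_comm d] using Nat.mul_le_mul_right d (show j + 1 + 1 ≤ Q + 1 by omega)

lemma mem_image_insert_powerset_sigmaB {d Q t v : ℕ} {σ : Finset ℕ} (ht : t ≤ Q)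
    (hσ : σ ∈ (sigmaB d t).powerset.image (insert v)) :
    v ∈ σ ∧ ∀ x ∈ σ, x = v ∨ x ∈ Ioc 0 (d * (Q + 1)) := by
  obtain ⟨τ, hτ, rfl⟩ := mem_image.mp hσ
  refine ⟨mem_insert_self v τ, fun x hx => ?_⟩
  rcases mem_insert.mp hx with rfl | hx
  · exact Or.inl rfl
  · exact Or.inr (sigmaB_subset_Ioc ht (mem_powerset.mp hτ hx))

lemma eCount_attached_sigmaB (d : ℕ) {Q t i j : ℕ} (k : ℕ) (ht : t ≤ Q) (hjQ : j ≤ Q) :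
    eCount ((sigmaB d t).powerset.image (insert (rootVtx d Q k))) ((Icc i j).biUnion (sigmaB d)) =
      if t ∈ Icc i j then 2 ^ d - 1 else 0 := by
  have hvS : rootVtx d Q k ∉ (Icc i j).biUnion (sigmaB d) := fun h =>
    rootVtx_notMem_Ioc d Q k <| biUnion_subset.mpr
      (fun t' ht' => sigmaB_subset_Ioc ((mem_Icc.mp ht').2.trans hjQ)) h
  have hcount := eCount_image_insert_powerset_add
    (fun h => rootVtx_notMem_Ioc d Q k (sigmaB_subset_Ioc ht h)) hvS
  rw [card_sigmaB] at hcount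
  split_ifs with hmem
  · rw [sdiff_eq_empty_iff_subset.mpr (subset_biUnion_of_mem _ hmem), card_empty,
      pow_zero] at hcount
    omega
  · have hdisj : Disjoint (sigmaB d t) ((Icc i j).biUnion (sigmaB d)) :=
      (disjoint_biUnion_right _ _ _).mpr fun t' ht' => pairwiseDisjoint_sigmaB d (Set.mem_univ t)
        (Set.mem_univ t') (fun h => hmem (h ▸ ht'))
    rw [sdiff_eq_self_of_disjoint hdisj, card_sigmaB] at hcount
    omega

lemma eCount_Tr_blocks {d Q r i j : ℕ} (hr : 0 < r) (hrQ : r < Q) (hjQ : j ≤ Q) :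
    eCount (Tr d Q r) ((Icc i j).biUnion (sigmaB d)) =
      eCount (T0 d Q) ((Icc i j).biUnion (sigmaB d)) + (2 ^ d - 1) * Lfun Q r i j := by
  have hT0 : ∀ σ ∈ T0 d Q, σ ⊆ Ioc 0 (d * (Q + 1)) := fun σ hσ => by
    rw [T0_eq_chainSimplices] at hσ
    exact mem_powerset.mp (mem_filter.mp hσ).1
  have hdisj : Disjoint (T0 d Q) ((range r).biUnion fun k =>
      (sigmaB d (target Q r k)).powerset.image (insert (rootVtx d Q k))) := by
    refine (disjoint_biUnion_right _ _ _).mpr fun k hk => disjoint_left.mpr fun σ hσ hσ' => ?_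
    have hv := (mem_image_insert_powerset_sigmaB (target_le hrQ (mem_range.mp hk)) hσ').1
    exact rootVtx_notMem_Ioc d Q k (hT0 σ hσ hv)
  have hpair : ((range r : Finset ℕ) : Set ℕ).PairwiseDisjoint fun k =>
      (sigmaB d (target Q r k)).powerset.image (insert (rootVtx d Q k)) := by
    intro k hk k' hk' hkk'
    refine disjoint_left.mpr fun σ hσ hσ' => ?_
    have hv := (mem_image_insert_powerset_sigmaB (target_le hrQ (mem_range.mp hk)) hσ).1
    rcases (mem_image_insert_powerset_sigmaB (target_le hrQ (mem_range.mp hk')) hσ').2 _ hv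
      with h | h
    · exact hkk' (by simpa [rootVtx] using h)
    · exact rootVtx_notMem_Ioc d Q k h
  rw [Tr, eCount_union hdisj, eCount_biUnion hpair, sum_congr rfl fun k hk =>
    eCount_attached_sigmaB d k (target_le hrQ (mem_range.mp hk)) hjQ, ← sum_filter, sum_const,
    smul_eq_mul, card_filter_target_mem hr hrQ, Lfun, mul_comm]

theorem Tr_density_interior_general (d Q r : ℕ) (hd : 1 ≤ d)
    (hr0 : 0 < r) (hrQ : r < Q) (i j : ℕ) (hi : 1 ≤ i) (hij : i ≤ j) (hjQ : j < Q) :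
    dens (Tr d Q r) ((Finset.Icc i j).biUnion (sigmaB d)) =
      2 ^ d + (((2 : ℝ) ^ d - 1) * (Lfun Q r i j : ℝ) + ((d : ℝ) - 1) * 2 ^ d + 1) /
        ((d : ℝ) * ((j : ℝ) - (i : ℝ) + 1)) := by
  have hcard : (#((Icc i j).biUnion (sigmaB d)) : ℝ) = d * (j - i + 1) := by
    rw [card_biUnion_sigmaB, Nat.cast_mul, Nat.cast_sub (by omega)]
    push_cast
    ring
  have hT0 : (eCount (T0 d Q) ((Icc i j).biUnion (sigmaB d)) : ℝ) + 2 ^ d =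
      (#((Icc i j).biUnion (sigmaB d)) + d) * 2 ^ d + 1 := by
    exact_mod_cast eCount_T0_blocks d hi hij hjQ
  rw [hcard] at hT0
  have hpos : (0 : ℝ) < d * (j - i + 1) := by
    have : (1 : ℝ) ≤ d := by exact_mod_cast hd
    have : (i : ℝ) ≤ j := by exact_mod_cast hij
    positivity
  rw [dens, eCount_Tr_blocks hr0 hrQ hjQ.le, hcard, div_eq_iff hpos.ne', add_mul,
    div_mul_cancel₀ _ hpos.ne', Nat.cast_add, Nat.cast_mul, Nat.cast_sub Nat.one_le_two_pow]
  push_cast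
  linear_combination hT0

/-- **Density formula, case `j < Q`.** Let `d, Q ≥ 1` and `0 < r < Q`.  For every
`1 ≤ i ≤ j < Q`, the set `S = σ_i ∪ σ_{i+1} ∪ … ∪ σ_j` satisfies
`dens_{T_r}(S) = 2^d + ((2^d − 1)·L[i,j] + (d−1)·2^d + 1) / (d(j − i + 1))`. -/
theorem Tr_density_interior (d Q r : ℕ) (hd : 1 ≤ d) (hQ : 1 ≤ Q)
    (hr0 : 0 < r) (hrQ : r < Q) (i j : ℕ) (hi : 1 ≤ i) (hij : i ≤ j) (hjQ : j < Q) :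
    dens (Tr d Q r) ((Finset.Icc i j).biUnion (sigmaB d)) =
      2 ^ d + (((2 : ℝ) ^ d - 1) * (Lfun Q r i j : ℝ) + ((d : ℝ) - 1) * 2 ^ d + 1) /
        ((d : ℝ) * ((j : ℝ) - (i : ℝ) + 1)) :=
  Tr_density_interior_general d Q r hd hr0 hrQ i j hi hij hjQ
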